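/- arXiv:2010.02341 — 8 statements merged into one kernel-verified Lean document; each statement's English description precedes it below -/
import Mathlib

section
/- Let G be a graph with no isolated vertices and let T be a minimal transversal of the collection of all minimal total dominating sets of G. Then there exists a vertex v in G such that N(v) = T. -/
def IsTDS {V : Type*} (G : SimpleGraph V) (S : Set V) : Prop :=
  ∀ v : V, ∃ u ∈ S, G.Adj v u

def IsMinTDS {V : Type*} (G : SimpleGraph V) (S : Set V) : Prop :=
  IsTDS G S ∧ ∀ T ⊂ S, ¬ IsTDS G T

lemma exists_minTDS_subset {V : Type*} [Fintype V] (G : SimpleGraph V) (S : Set V)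
    (hS : IsTDS G S) : ∃ S' ⊆ S, IsMinTDS G S' := by
  have key : ∀ n (S : Set V), S.ncard = n → IsTDS G S → ∃ S' ⊆ S, IsMinTDS G S' := by
    intro n
    induction n using Nat.strong_induction_on with
    | _ n ih =>
      intro S hn hS
      by_cases h : ∃ T ⊂ S, IsTDS G T
      · obtain ⟨T, hTS, hT⟩ := h
        have hlt : T.ncard < S.ncard := Set.ncard_lt_ncard hTS (Set.toFinite S)
        obtain ⟨S', hs, hmin⟩ := ih T.ncard (hn ▸ hlt) T rfl hT
        exact ⟨S', hs.trans hTS.subset, hmin⟩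
      · exact ⟨S, subset_rfl, hS, fun T hT hT' => h ⟨T, hT, hT'⟩⟩
  exact key S.ncard S rfl hS

/-- Any minimal transversal of the family of all minimal total dominating sets of a
graph without isolated vertices is the open neighborhood of some vertex. -/
theorem stmt_1 {V : Type*} [Fintype V] (G : SimpleGraph V)
    (hiso : ∀ v : V, ∃ u, G.Adj v u) (T : Set V)
    (htrans : ∀ S : Set V, IsMinTDS G S → (T ∩ S).Nonempty)
    (hmin : ∀ T' ⊂ T, ¬ ∀ S : Set V, IsMinTDS G S → (T' ∩ S).Nonempty) :
    ∃ v : V, G.neighborSet v = T := by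
  have hnot : ¬ IsTDS G Tᶜ := by
    intro h
    obtain ⟨S, hsub, hminS⟩ := exists_minTDS_subset G Tᶜ h
    obtain ⟨x, hxT, hxS⟩ := htrans S hminS
    exact hsub hxS hxT
  rw [IsTDS] at hnot
  push_neg at hnot
  obtain ⟨v, hv⟩ := hnot
  have hsub : G.neighborSet v ⊆ T := by
    intro u hu
    by_contra hu'
    exact hv u hu' hu
  have htransN : ∀ S, IsMinTDS G S → ((G.neighborSet v) ∩ S).Nonempty := by
    intro S hS
    obtain ⟨u, hu, hadj⟩ := hS.1 v
    exact ⟨u, hadj, hu⟩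
  refine ⟨v, ?_⟩
  by_contra hne
  exact hmin _ (ssubset_of_subset_of_ne hsub hne) htransN
end

section
/- For every integer k ≥ 2, there are infinitely many (pairwise non-isomorphic) well-totally-dominated graphs with total domination number k. -/
/-!
Take a clique on `k ≥ 2` vertices and attach to each of its vertices at least one leaf; any
number of further leaves may be added, so the graph can be made arbitrarily large. A total
dominating set must contain the unique neighbour of every leaf, i.e. the whole clique, and the
clique already totally dominates. So the clique is the only minimal total dominating set.
-/

section TotalDomination

variable {V : Type*} {G : SimpleGraph V} {S C : Set V}

theorem IsTDS.mem_of_forall_adj_eq {u v : V} (hS : IsTDS G S) (hu : ∀ w, G.Adj u w → w = v) :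
    v ∈ S := by
  obtain ⟨w, hwS, huw⟩ := hS u
  exact hu w huw ▸ hwS

theorem isMinTDS_iff_eq_of_forall_subset (hC : IsTDS G C) (hsub : ∀ T, IsTDS G T → C ⊆ T) :
    IsMinTDS G S ↔ S = C := by
  constructor
  · rintro ⟨hS, hmin⟩
    obtain hlt | heq := (hsub S hS).ssubset_or_eq
    · exact absurd hC (hmin C hlt)
    · exact heq.symm
  · rintro rfl
    exact ⟨hC, fun T hT hTDS => hT.2 (hsub T hTDS)⟩

end TotalDomination

/-- The vertices `i < k` form a clique and every other vertex `v` is a leaf hanging at `v % k`. -/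
def cliqueWithLeaves (k m : ℕ) : SimpleGraph (Fin m) :=
  SimpleGraph.fromRel fun u v => u.val < k ∧ (v.val < k ∨ v.val % k = u.val)

section CliqueWithLeaves

variable {k m : ℕ}

theorem isTDS_cliqueWithLeaves (hk : 2 ≤ k) (hkm : k ≤ m) :
    IsTDS (cliqueWithLeaves k m) {v | v.val < k} := by
  intro v
  by_cases hv : v.val < k
  · -- a clique vertex is dominated by vertex `0`, or by vertex `1` if it is `0` itself
    refine ⟨⟨if v.val = 0 then 1 else 0, by split_ifs <;> omega⟩, by split_ifs <;> simp <;> omega,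
      ?_⟩
    simp only [cliqueWithLeaves, SimpleGraph.fromRel_adj, ne_eq, Fin.ext_iff]
    split_ifs <;> omega
  · have hmod : v.val % k < k := Nat.mod_lt _ (by omega)
    refine ⟨⟨v.val % k, by omega⟩, hmod, ?_⟩
    refine (SimpleGraph.fromRel_adj _ _ _).2 ⟨fun h => hv (Fin.ext_iff.mp h ▸ hmod), Or.inr ⟨hmod, Or.inr rfl⟩⟩

theorem subset_of_isTDS_cliqueWithLeaves (h2k : 2 * k ≤ m) {S : Set (Fin m)}
    (hS : IsTDS (cliqueWithLeaves k m) S) : {v | v.val < k} ⊆ S := by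
  intro v (hv : v.val < k)
  refine hS.mem_of_forall_adj_eq (u := ⟨k + v.val, by omega⟩) fun w hw => ?_
  simp only [cliqueWithLeaves, SimpleGraph.fromRel_adj, ne_eq, Fin.ext_iff] at hw
  rw [Nat.add_mod_left, Nat.mod_eq_of_lt hv] at hw
  exact Fin.ext (by omega)

theorem ncard_val_lt (hkm : k ≤ m) : {v : Fin m | v.val < k}.ncard = k := by
  rw [← Finset.coe_filter_univ, Set.ncard_coe_finset, Fin.card_filter_val_lt]
  omega

end CliqueWithLeaves

/-- For every k ≥ 2 there are infinitely many (arbitrarily large, hence pairwise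
non-isomorphic) well-totally-dominated graphs with total domination number k. -/
theorem stmt_3 (k : ℕ) (hk : 2 ≤ k) (n : ℕ) :
    ∃ m ≥ n, ∃ G : SimpleGraph (Fin m),
      (∀ v, ∃ u, G.Adj v u) ∧
      (∃ S : Set (Fin m), IsMinTDS G S ∧ S.ncard = k) ∧
      (∀ S : Set (Fin m), IsMinTDS G S → S.ncard = k) := by
  have h2k : 2 * k ≤ max n (2 * k) := le_max_right _ _
  have hTDS := isTDS_cliqueWithLeaves hk (by omega : k ≤ max n (2 * k))
  have hmin : ∀ S, IsMinTDS (cliqueWithLeaves k _) S ↔ S = {v | v.val < k} :=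
    fun S => isMinTDS_iff_eq_of_forall_subset hTDS
      fun T => subset_of_isTDS_cliqueWithLeaves h2k
  have hcard := ncard_val_lt (by omega : k ≤ max n (2 * k))
  refine ⟨max n (2 * k), le_max_left _ _, cliqueWithLeaves k _, fun v => ?_,
    ⟨_, (hmin _).2 rfl, hcard⟩, fun S hS => (hmin S).1 hS ▸ hcard⟩
  obtain ⟨u, -, hvu⟩ := hTDS v
  exact ⟨u, hvu⟩
end

section
/- If G is a triangle-free graph with total domination number 2, then G is bipartite; moreover its packing number equals 1 if G is complete bipartite and equals 2 otherwise. -/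
/-- A packing: vertices with pairwise disjoint closed neighborhoods. -/
def IsPacking {V : Type*} (G : SimpleGraph V) (P : Set V) : Prop :=
  P.Pairwise fun u v =>
    Disjoint (insert u (G.neighborSet u)) (insert v (G.neighborSet v))

/-- The packing number of a graph. -/
noncomputable def packingNumber {V : Type*} [Fintype V] (G : SimpleGraph V) : ℕ :=
  sSup {n : ℕ | ∃ P : Set V, IsPacking G P ∧ P.ncard = n}

/-- G is complete bipartite. -/
def IsCompleteBipartite {V : Type*} (G : SimpleGraph V) : Prop :=
  ∃ X Y : Set V, Disjoint X Y ∧ X ∪ Y = Set.univ ∧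
    ∀ a b : V, G.Adj a b ↔ (a ∈ X ∧ b ∈ Y) ∨ (a ∈ Y ∧ b ∈ X)

/-- A triangle-free graph with total domination number 2 is bipartite; its packing
number is 1 when it is complete bipartite and 2 otherwise. -/
theorem stmt_6 {V : Type*} [Fintype V] (G : SimpleGraph V)
    (htf : G.CliqueFree 3) (hiso : ∀ v : V, ∃ u, G.Adj v u)
    (h2 : ∃ S : Set V, IsTDS G S ∧ S.ncard = 2) :
    G.Colorable 2 ∧
      (IsCompleteBipartite G → packingNumber G = 1) ∧
      (¬ IsCompleteBipartite G → packingNumber G = 2) := by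
  classical
  obtain ⟨S, hS, hcard⟩ := h2
  rw [Set.ncard_eq_two] at hcard
  obtain ⟨u, v, huv, rfl⟩ := hcard
  have hadj : G.Adj u v := by
    obtain ⟨w, hw, hadjw⟩ := hS u
    rcases hw with rfl | rfl
    · exact absurd hadjw (G.irrefl)
    · exact hadjw
  have tri : ∀ a b c, G.Adj a b → G.Adj a c → G.Adj b c → False := fun a b c h1 h2' h3 =>
    htf {a, b, c} (SimpleGraph.is3Clique_triple_iff.mpr ⟨h1, h2', h3⟩)
  have disj : ∀ a, G.Adj v a → G.Adj u a → False := fun a ha hb => tri u v a hadj hb ha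
  have cover : ∀ a, G.Adj v a ∨ G.Adj u a := by
    intro a
    obtain ⟨w, hw, hadjw⟩ := hS a
    rcases hw with rfl | rfl
    · exact Or.inr hadjw.symm
    · exact Or.inl hadjw.symm
  have cross : ∀ a b, G.Adj a b → (G.Adj v a ∧ G.Adj u b) ∨ (G.Adj u a ∧ G.Adj v b) := by
    intro a b hab
    rcases cover a with ha | ha <;> rcases cover b with hb | hb
    · exact (tri v a b ha hb hab).elim
    · exact Or.inl ⟨ha, hb⟩
    · exact Or.inr ⟨ha, hb⟩
    · exact (tri u a b ha hb hab).elim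
  have hcol : G.Colorable 2 := by
    refine ⟨SimpleGraph.Coloring.mk (fun a => if G.Adj v a then 0 else 1) ?_⟩
    intro a b hab
    rcases cross a b hab with ⟨ha, hb⟩ | ⟨ha, hb⟩
    · have hb' : ¬ G.Adj v b := fun h => disj b h hb
      simp [ha, hb']
    · have ha' : ¬ G.Adj v a := fun h => disj a h ha
      simp [ha', hb]
  -- packing has at most 2 elements
  have hle2 : ∀ P : Set V, IsPacking G P → P.ncard ≤ 2 := by
    intro P hP
    have sameside : ∀ w : V, ∀ a ∈ P, ∀ b ∈ P, G.Adj w a → G.Adj w b → a = b := by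
      intro w a ha b hb hwa hwb
      by_contra hne
      exact Set.disjoint_left.mp (hP ha hb hne)
        (Set.mem_insert_of_mem _ hwa.symm) (Set.mem_insert_of_mem _ hwb.symm)
    have hPeq : P = (P ∩ {a | G.Adj v a}) ∪ (P ∩ {a | G.Adj u a}) := by
      ext a
      simp only [Set.mem_union, Set.mem_inter_iff, Set.mem_setOf_eq]
      constructor
      · intro ha
        rcases cover a with h | h
        · exact Or.inl ⟨ha, h⟩
        · exact Or.inr ⟨ha, h⟩
      · rintro (⟨h, _⟩ | ⟨h, _⟩) <;> exact h
    rw [hPeq]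
    refine le_trans (Set.ncard_union_le _ _) ?_
    have h1 : (P ∩ {a | G.Adj v a}).ncard ≤ 1 := by
      rw [Set.ncard_le_one (Set.toFinite _)]
      rintro a ⟨ha, ha'⟩ b ⟨hb, hb'⟩
      exact sameside v a ha b hb ha' hb'
    have h1' : (P ∩ {a | G.Adj u a}).ncard ≤ 1 := by
      rw [Set.ncard_le_one (Set.toFinite _)]
      rintro a ⟨ha, ha'⟩ b ⟨hb, hb'⟩
      exact sameside u a ha b hb ha' hb'
    omega
  -- pairs across the bipartition that are non-adjacent form packings
  have pack_pair : ∀ a b, G.Adj v a → G.Adj u b → ¬ G.Adj a b → IsPacking G {a, b} := by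
    intro a b ha hb hnab
    have hdis : Disjoint (insert a (G.neighborSet a)) (insert b (G.neighborSet b)) := by
      rw [Set.disjoint_left]
      rintro c (rfl | hc) (rfl | hc')
      · exact disj c ha hb
      · exact hnab hc'.symm
      · exact hnab hc
      · -- c adjacent to both a and b
        have hcu : G.Adj u c := by
          rcases cross a c hc with ⟨_, h⟩ | ⟨h, _⟩
          · exact h
          · exact (disj a ha h).elim
        have hcv : G.Adj v c := by
          rcases cross b c hc' with ⟨h, _⟩ | ⟨_, h⟩
          · exact (disj b h hb).elim
          · exact h
        exact disj c hcv hcu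
    intro x hx y hy hxy
    simp only [Set.mem_insert_iff, Set.mem_singleton_iff] at hx hy
    rcases hx with rfl | rfl <;> rcases hy with rfl | rfl
    · exact (hxy rfl).elim
    · exact hdis
    · exact hdis.symm
    · exact (hxy rfl).elim
  -- complete bipartite implies packings have at most 1 element
  have hle1 : IsCompleteBipartite G → ∀ P : Set V, IsPacking G P → P.ncard ≤ 1 := by
    rintro ⟨X', Y', hdisj, huniv, hiff⟩ P hP
    rw [Set.ncard_le_one (Set.toFinite _)]
    intro a ha b hb
    by_contra hne
    have hD := hP ha hb hne
    have sides : ∀ x : V, x ∈ X' ∨ x ∈ Y' := fun x => by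
      have : x ∈ X' ∪ Y' := huniv ▸ Set.mem_univ x
      exact this
    have hnadj : ¬ G.Adj a b := fun h =>
      Set.disjoint_left.mp hD (Set.mem_insert_of_mem _ h) (Set.mem_insert _ _)
    have common : ∀ c, G.Adj a c → G.Adj b c → False := fun c h1 h2' =>
      Set.disjoint_left.mp hD (Set.mem_insert_of_mem _ h1) (Set.mem_insert_of_mem _ h2')
    obtain ⟨c, hc⟩ := hiso a
    rcases sides a with haX | haY <;> rcases sides b with hbX | hbY
    · have hcY : c ∈ Y' := by
        rcases (hiff a c).mp hc with ⟨_, h⟩ | ⟨h, _⟩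
        · exact h
        · exact ((Set.disjoint_left.mp hdisj haX) h).elim
      exact common c hc ((hiff b c).mpr (Or.inl ⟨hbX, hcY⟩))
    · exact hnadj ((hiff a b).mpr (Or.inl ⟨haX, hbY⟩))
    · exact hnadj ((hiff a b).mpr (Or.inr ⟨haY, hbX⟩))
    · have hcX : c ∈ X' := by
        rcases (hiff a c).mp hc with ⟨h, _⟩ | ⟨_, h⟩
        · exact ((Set.disjoint_left.mp hdisj h) haY).elim
        · exact h
      exact common c hc ((hiff b c).mpr (Or.inr ⟨hbY, hcX⟩))
  have h0mem : 0 ∈ {n : ℕ | ∃ P : Set V, IsPacking G P ∧ P.ncard = n} :=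
    ⟨∅, Set.pairwise_empty _, Set.ncard_empty _⟩
  have h1mem : 1 ∈ {n : ℕ | ∃ P : Set V, IsPacking G P ∧ P.ncard = n} :=
    ⟨{u}, Set.pairwise_singleton _ _, Set.ncard_singleton u⟩
  have hbdd : BddAbove {n : ℕ | ∃ P : Set V, IsPacking G P ∧ P.ncard = n} := by
    refine ⟨2, ?_⟩
    rintro n ⟨P, hP, rfl⟩
    exact hle2 P hP
  refine ⟨hcol, ?_, ?_⟩
  · intro hCB
    refine le_antisymm (csSup_le ⟨0, h0mem⟩ ?_) (le_csSup hbdd h1mem)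
    rintro n ⟨P, hP, rfl⟩
    exact hle1 hCB P hP
  · intro hnCB
    have hex : ∃ a b, G.Adj v a ∧ G.Adj u b ∧ ¬ G.Adj a b := by
      by_contra hno
      push_neg at hno
      apply hnCB
      refine ⟨{a | G.Adj v a}, {a | G.Adj u a}, ?_, ?_, ?_⟩
      · rw [Set.disjoint_left]
        intro a ha hb
        exact disj a ha hb
      · ext a
        simp only [Set.mem_union, Set.mem_setOf_eq, Set.mem_univ, iff_true]
        exact cover a
      · intro a b
        constructor
        · exact cross a b
        · rintro (⟨ha, hb⟩ | ⟨ha, hb⟩)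
          · exact hno a b ha hb
          · exact (hno b a hb ha).symm
    obtain ⟨a, b, ha, hb, hnab⟩ := hex
    have hne : a ≠ b := fun h => disj a ha (h ▸ hb)
    have h2mem : 2 ∈ {n : ℕ | ∃ P : Set V, IsPacking G P ∧ P.ncard = n} :=
      ⟨{a, b}, pack_pair a b ha hb hnab, Set.ncard_pair hne⟩
    refine le_antisymm (csSup_le ⟨0, h0mem⟩ ?_) (le_csSup hbdd h2mem)
    rintro n ⟨P, hP, rfl⟩
    exact hle2 P hP
end

section
/- Let G be a planar well-totally-dominated graph with total domination number 2. If the subgraph G_de of dominating edges has a matching of size 3, then G has at most 8 vertices. -/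
/-- H is a minor of G (via branch sets). -/
def HasMinor {V W : Type*} (G : SimpleGraph V) (H : SimpleGraph W) : Prop :=
  ∃ f : W → Set V,
    (∀ w, (f w).Nonempty) ∧
    (∀ w, (G.induce (f w)).Connected) ∧
    (Pairwise fun a b => Disjoint (f a) (f b)) ∧
    ∀ a b : W, H.Adj a b → ∃ u ∈ f a, ∃ v ∈ f b, G.Adj u v

/-- Planarity via Wagner's theorem: no K₅ and no K₃,₃ minor. -/
def IsPlanar {V : Type*} (G : SimpleGraph V) : Prop :=
  ¬ HasMinor G (⊤ : SimpleGraph (Fin 5)) ∧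
  ¬ HasMinor G (completeBipartiteGraph (Fin 3) (Fin 3))

/-- An edge whose endpoints form a total dominating set. -/
def DomEdge {V : Type*} (G : SimpleGraph V) (u v : V) : Prop :=
  G.Adj u v ∧ IsTDS G {u, v}

lemma connected_pair {V : Type*} (G : SimpleGraph V) {a b : V} (hab : G.Adj a b) :
    (G.induce {a, b}).Connected := by
  rw [SimpleGraph.connected_iff]
  have ha : a ∈ ({a, b} : Set V) := by simp
  have hb : b ∈ ({a, b} : Set V) := by simp
  refine ⟨?_, ⟨⟨a, ha⟩⟩⟩
  have key : ∀ w : ({a, b} : Set V), w = ⟨a, ha⟩ ∨ w = ⟨b, hb⟩ := by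
    rintro ⟨w, hw | hw⟩
    · left; exact Subtype.ext hw
    · right; exact Subtype.ext hw
  have hadj : (G.induce {a, b}).Adj ⟨a, ha⟩ ⟨b, hb⟩ := hab
  intro u v
  rcases key u with rfl | rfl <;> rcases key v with rfl | rfl
  · exact SimpleGraph.Reachable.refl _
  · exact hadj.reachable
  · exact hadj.symm.reachable
  · exact SimpleGraph.Reachable.refl _

lemma connected_singleton {V : Type*} (G : SimpleGraph V) (a : V) :
    (G.induce {a}).Connected := by
  rw [SimpleGraph.connected_iff]
  refine ⟨?_, ⟨⟨a, rfl⟩⟩⟩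
  rintro ⟨u, hu⟩ ⟨v, hv⟩
  have : (⟨u, hu⟩ : ({a} : Set V)) = ⟨v, hv⟩ := by
    apply Subtype.ext
    simp only [Set.mem_singleton_iff] at hu hv
    exact hu.trans hv.symm
  rw [this]

/-- A planar well-totally-dominated graph with total domination number 2 whose
dominating-edge subgraph has a matching of size 3 has at most 8 vertices. -/
theorem stmt_9 {V : Type*} [Fintype V] (G : SimpleGraph V)
    (hplanar : IsPlanar G) (hiso : ∀ v : V, ∃ u, G.Adj v u)
    (hex : ∃ S : Set V, IsMinTDS G S)
    (hWTD2 : ∀ S : Set V, IsMinTDS G S → S.ncard = 2)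
    (e : Fin 3 → V × V)
    (hdom : ∀ i, DomEdge G (e i).1 (e i).2)
    (hmatch : Pairwise fun i j =>
      Disjoint ({(e i).1, (e i).2} : Set V) {(e j).1, (e j).2}) :
    Fintype.card V ≤ 8 := by
  classical
  by_contra hcard
  push_neg at hcard
  obtain ⟨_, hK33⟩ := hplanar
  set P : Finset V := {(e 0).1, (e 0).2, (e 1).1, (e 1).2, (e 2).1, (e 2).2} with hP
  have hPmem : ∀ i : Fin 3, (e i).1 ∈ P ∧ (e i).2 ∈ P := by
    intro i
    fin_cases i <;> simp [hP]
  have hPcard : P.card ≤ 6 := by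
    refine le_trans (Finset.card_insert_le _ _) ?_
    refine le_trans (Nat.add_le_add_right (Finset.card_insert_le _ _) 1) ?_
    refine le_trans (Nat.add_le_add_right (Nat.add_le_add_right (Finset.card_insert_le _ _) 1) 1) ?_
    refine le_trans (Nat.add_le_add_right (Nat.add_le_add_right (Nat.add_le_add_right (Finset.card_insert_le _ _) 1) 1) 1) ?_
    refine le_trans (Nat.add_le_add_right (Nat.add_le_add_right (Nat.add_le_add_right (Nat.add_le_add_right (Finset.card_insert_le _ _) 1) 1) 1) 1) ?_
    have := Finset.card_le_univ ({(e 2).2} : Finset V)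
    simp [Finset.card_singleton]
  have hcompl : Pᶜ.card = Fintype.card V - P.card := Finset.card_compl P
  have h0 : (Pᶜ : Finset V).Nonempty := Finset.card_pos.mp (by omega)
  obtain ⟨x0, hx0⟩ := h0
  have h1 : ((Pᶜ : Finset V).erase x0).Nonempty := Finset.card_pos.mp (by
    rw [Finset.card_erase_of_mem hx0]; omega)
  obtain ⟨x1, hx1⟩ := h1
  have h2 : (((Pᶜ : Finset V).erase x0).erase x1).Nonempty := Finset.card_pos.mp (by
    rw [Finset.card_erase_of_mem hx1, Finset.card_erase_of_mem hx0]; omega)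
  obtain ⟨x2, hx2⟩ := h2
  have hx1' := Finset.mem_erase.mp hx1
  have hx2' := Finset.mem_erase.mp hx2
  have hx2'' := Finset.mem_erase.mp hx2'.2
  set x : Fin 3 → V := ![x0, x1, x2] with hx
  have hxP : ∀ j : Fin 3, x j ∉ P := by
    intro j
    fin_cases j <;> simp [hx] <;>
      [exact Finset.mem_compl.mp hx0; exact Finset.mem_compl.mp hx1'.2;
       exact Finset.mem_compl.mp hx2''.2]
  have d10 : x1 ≠ x0 := hx1'.1
  have d21 : x2 ≠ x1 := hx2'.1
  have d20 : x2 ≠ x0 := hx2''.1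
  have hxinj : ∀ i j : Fin 3, x i = x j → i = j := by
    intro i j
    fin_cases i <;> fin_cases j <;>
      simp only [hx, Matrix.cons_val_zero, Matrix.cons_val_one, Matrix.head_cons,
        Matrix.cons_val_two, Matrix.tail_cons, Matrix.cons_val_fin_one] <;>
      intro hij <;>
      first
        | rfl
        | exact absurd hij d10.symm | exact absurd hij d10
        | exact absurd hij d21.symm | exact absurd hij d21
        | exact absurd hij d20.symm | exact absurd hij d20
        | decide
  apply hK33
  refine ⟨Sum.elim (fun i => {(e i).1, (e i).2}) (fun j => {x j}), ?_, ?_, ?_, ?_⟩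
  · rintro (i | j)
    · exact ⟨(e i).1, by simp⟩
    · exact ⟨x j, rfl⟩
  · rintro (i | j)
    · exact connected_pair G (hdom i).1
    · exact connected_singleton G (x j)
  · rintro (i | i) (j | j) hne
    · exact hmatch (fun h => hne (by rw [h]))
    · simp only [Sum.elim_inl, Sum.elim_inr]
      rw [Set.disjoint_singleton_right]
      rintro (h | h) <;> [exact hxP j (h ▸ (hPmem i).1); exact hxP j (h ▸ (hPmem i).2)]
    · simp only [Sum.elim_inl, Sum.elim_inr]
      rw [Set.disjoint_singleton_left]
      rintro (h | h) <;> [exact hxP i (h ▸ (hPmem j).1); exact hxP i (h ▸ (hPmem j).2)]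
    · simp only [Sum.elim_inr]
      rw [Set.disjoint_singleton_left, Set.mem_singleton_iff]
      intro h
      exact hne (by rw [hxinj _ _ h])
  · rintro (i | i) (j | j) hadj
    · simp [completeBipartiteGraph] at hadj
    · obtain ⟨u, hu, huadj⟩ := (hdom i).2 (x j)
      exact ⟨u, hu, x j, rfl, huadj.symm⟩
    · obtain ⟨u, hu, huadj⟩ := (hdom j).2 (x i)
      exact ⟨x i, rfl, u, hu, huadj⟩
    · simp [completeBipartiteGraph] at hadj
end

section
/- Let G be a well-totally-dominated graph, let u_1v_1, …, u_mv_m be edges of G with A = ∪{u_i, v_i}, such that the subgraph induced by A is a disjoint union of m copies of K_2, and such that G − N[A] has no isolated vertices. Then G − N[A] is also well-totally-dominated. -/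
/-- All minimal total dominating sets have the same size. -/
def WTD {V : Type*} (G : SimpleGraph V) : Prop :=
  ∀ S T : Set V, IsMinTDS G S → IsMinTDS G T → S.ncard = T.ncard

/-- If the edges uᵢvᵢ induce a disjoint union of m copies of K₂ in a WTD graph G,
and G − N[A] (A the set of endpoints) has no isolated vertices, then G − N[A]
is also WTD. -/
theorem stmt_12 {V : Type*} [Fintype V] (G : SimpleGraph V)
    (hiso : ∀ v : V, ∃ u, G.Adj v u) (hWTD : WTD G)
    {m : ℕ} (u v : Fin m → V)
    (hadj : ∀ i, G.Adj (u i) (v i))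
    (hu : Function.Injective u) (hv : Function.Injective v)
    (huv : ∀ i j, u i ≠ v j)
    (A : Set V) (hA : A = Set.range u ∪ Set.range v)
    (hK2 : ∀ x ∈ A, ∀ y ∈ A, G.Adj x y → ∃ i, ({x, y} : Set V) = {u i, v i})
    (B : Set V) (hB : B = {w : V | w ∈ A ∨ ∃ x ∈ A, G.Adj x w})
    (hniso : ∀ w : ↥Bᶜ, ∃ z : ↥Bᶜ, (G.induce Bᶜ).Adj w z) :
    WTD (G.induce Bᶜ) := by
  have hAB : A ⊆ B := fun w hw => by rw [hB]; exact Or.inl hw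
  have hNB : ∀ x ∈ A, ∀ w, G.Adj x w → w ∈ B := fun x hx w hxw => by
    rw [hB]; exact Or.inr ⟨x, hx, hxw⟩
  have huA : ∀ i, u i ∈ A := fun i => by rw [hA]; exact Or.inl ⟨i, rfl⟩
  have hvA : ∀ i, v i ∈ A := fun i => by rw [hA]; exact Or.inr ⟨i, rfl⟩
  have key : ∀ S' : Set ↥Bᶜ, IsMinTDS (G.induce Bᶜ) S' →
      IsMinTDS G (Subtype.val '' S' ∪ A) := by
    rintro S' ⟨hS1, hS2⟩
    constructor
    · intro w
      by_cases hw : w ∈ B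
      · rw [hB] at hw
        rcases hw with hw | ⟨x, hx, hxw⟩
        · rw [hA] at hw
          rcases hw with ⟨i, rfl⟩ | ⟨i, rfl⟩
          · exact ⟨v i, Or.inr (hvA i), hadj i⟩
          · exact ⟨u i, Or.inr (huA i), (hadj i).symm⟩
        · exact ⟨x, Or.inr hx, hxw.symm⟩
      · obtain ⟨s, hs, hadj'⟩ := hS1 ⟨w, hw⟩
        exact ⟨↑s, Or.inl ⟨s, hs, rfl⟩, hadj'⟩
    · rintro T hT hTDS
      obtain ⟨hTsub, hTne⟩ := hT
      obtain ⟨x, hxU, hxT⟩ := Set.not_subset.mp hTne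
      -- helper: any element of T adjacent to a vertex of A lies in A
      have hTA : ∀ p ∈ A, ∀ w ∈ T, G.Adj p w → w ∈ A := by
        intro p hp w hwT hpw
        have hwB : w ∈ B := hNB p hp w hpw
        rcases hTsub hwT with ⟨s, _, rfl⟩ | h
        · exact absurd hwB s.2
        · exact h
      rcases hxU with ⟨x', hx'S, rfl⟩ | hxA
      · -- x comes from S'
        set T' : Set ↥Bᶜ := {w : ↥Bᶜ | ↑w ∈ T} with hT'
        have hT'sub : T' ⊆ S' := by
          intro w hw
          rcases hTsub hw with ⟨s, hs, hse⟩ | h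
          · exact (Subtype.ext hse : s = w) ▸ hs
          · exact absurd (hAB h) w.2
        have hT'ss : T' ⊂ S' := by
          refine ⟨hT'sub, fun hc => hxT (hc hx'S)⟩
        have := hS2 T' hT'ss
        rw [IsTDS] at this
        push_neg at this
        obtain ⟨w0, hw0⟩ := this
        obtain ⟨z, hzT, hadjz⟩ := hTDS ↑w0
        have hzA : z ∉ A := by
          intro hz
          exact absurd (hNB z hz ↑w0 hadjz.symm) w0.2
        have hzB : z ∈ Bᶜ := by
          rcases hTsub hzT with ⟨s, _, rfl⟩ | h
          · exact s.2
          · exact absurd h hzA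
        exact hw0 ⟨z, hzB⟩ hzT hadjz
      · -- x ∈ A
        rw [hA] at hxA
        rcases hxA with ⟨i, rfl⟩ | ⟨i, rfl⟩
        · -- x = u i; look at who dominates v i
          obtain ⟨w, hwT, hvw⟩ := hTDS (v i)
          have hwA : w ∈ A := hTA (v i) (hvA i) w hwT hvw
          obtain ⟨j, hset⟩ := hK2 (v i) (hvA i) w hwA hvw
          have h1 : v i ∈ ({u j, v j} : Set V) := by rw [← hset]; exact Or.inl rfl
          have hij : i = j := by
            rcases h1 with h1 | h1
            · exact absurd h1.symm (huv j i)
            · exact hv h1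
          have h2 : u i ∈ ({v i, w} : Set V) := by
            rw [hset, hij]; exact Or.inl rfl
          rcases h2 with h2 | h2
          · exact absurd h2 (huv i i)
          · exact hxT (h2 ▸ hwT)
        · -- x = v i; look at who dominates u i
          obtain ⟨w, hwT, hvw⟩ := hTDS (u i)
          have hwA : w ∈ A := hTA (u i) (huA i) w hwT hvw
          obtain ⟨j, hset⟩ := hK2 (u i) (huA i) w hwA hvw
          have h1 : u i ∈ ({u j, v j} : Set V) := by rw [← hset]; exact Or.inl rfl
          have hij : i = j := by
            rcases h1 with h1 | h1
            · exact hu h1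
            · exact absurd h1 (huv i j)
          have h2 : v i ∈ ({u i, w} : Set V) := by
            rw [hset, hij]; exact Or.inr rfl
          rcases h2 with h2 | h2
          · exact absurd h2.symm (huv i i)
          · exact hxT (h2 ▸ hwT)
  intro S T hS hT
  have h := hWTD _ _ (key S hS) (key T hT)
  have hdS : Disjoint (Subtype.val '' S) A := by
    rw [Set.disjoint_left]
    rintro a ⟨s, _, rfl⟩ ha
    exact s.2 (hAB ha)
  have hdT : Disjoint (Subtype.val '' T) A := by
    rw [Set.disjoint_left]
    rintro a ⟨s, _, rfl⟩ ha
    exact s.2 (hAB ha)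
  rw [Set.ncard_union_eq hdS, Set.ncard_union_eq hdT,
    Set.ncard_image_of_injective _ Subtype.val_injective,
    Set.ncard_image_of_injective _ Subtype.val_injective] at h
  omega
end

section
/- For any graph G with no isolated vertices, the packing number of G is at most the total domination number of G. -/
noncomputable def totalDominationNumber {V : Type*} [Fintype V] (G : SimpleGraph V) : ℕ :=
  sInf {n : ℕ | ∃ S : Set V, IsTDS G S ∧ S.ncard = n}

lemma packing_le_tds {V : Type*} [Fintype V] (G : SimpleGraph V) {P S : Set V}
    (hP : IsPacking G P) (hS : IsTDS G S) : P.ncard ≤ S.ncard := by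
  choose f hfS hfadj using fun p => hS p
  apply Set.ncard_le_ncard_of_injOn f (fun a _ => hfS a)
  · intro a ha b hb hab
    by_contra hne
    have hdisj := hP ha hb hne
    exact hdisj.ne_of_mem (Set.mem_insert_iff.2 (Or.inr (hfadj a)))
      (Set.mem_insert_iff.2 (Or.inr (hfadj b))) hab

/-- The packing number is at most the total domination number. -/
theorem stmt_15 {V : Type*} [Fintype V] (G : SimpleGraph V)
    (hiso : ∀ v : V, ∃ u, G.Adj v u) :
    packingNumber G ≤ totalDominationNumber G := by
  have hTDSuniv : IsTDS G Set.univ := fun v => by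
    obtain ⟨u, hu⟩ := hiso v; exact ⟨u, Set.mem_univ u, hu⟩
  have hne : {n : ℕ | ∃ S : Set V, IsTDS G S ∧ S.ncard = n}.Nonempty :=
    ⟨_, Set.univ, hTDSuniv, rfl⟩
  obtain ⟨S, hS, hScard⟩ := Nat.sInf_mem hne
  apply csSup_le
  · exact ⟨0, ∅, by simp [IsPacking], by simp⟩
  · rintro n ⟨P, hP, rfl⟩
    rw [totalDominationNumber, ← hScard]
    exact packing_le_tds G hP hS
end

section
/- If G is a graph with total domination number 2, then the diameter of G is at most 3; moreover, diam(G) = 3 if and only if the packing number ρ(G) = 2. -/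
/-- If γₜ(G) = 2 then diam(G) ≤ 3, and diam(G) = 3 iff ρ(G) = 2. -/
theorem stmt_16 {V : Type*} [Fintype V] (G : SimpleGraph V)
    (hconn : G.Connected)
    (h2 : ∃ S : Set V, IsTDS G S ∧ S.ncard = 2) :
    G.diam ≤ 3 ∧ (G.diam = 3 ↔ packingNumber G = 2) := by
  classical
  obtain ⟨S, hS, hcard⟩ := h2
  obtain ⟨u, v, huv, rfl⟩ := Set.ncard_eq_two.mp hcard
  have hadj : G.Adj u v := by
    obtain ⟨w, hw, ha⟩ := hS u
    simp only [Set.mem_insert_iff, Set.mem_singleton_iff] at hw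
    rcases hw with rfl | rfl
    · exact absurd ha (G.irrefl)
    · exact ha
  have hdom : ∀ x, G.Adj x u ∨ G.Adj x v := by
    intro x
    obtain ⟨w, hw, ha⟩ := hS x
    simp only [Set.mem_insert_iff, Set.mem_singleton_iff] at hw
    rcases hw with rfl | rfl
    · exact Or.inl ha
    · exact Or.inr ha
  haveI : Nonempty V := ⟨u⟩
  -- all distances are at most 3
  have hdist : ∀ x y, G.dist x y ≤ 3 := by
    intro x y
    rcases hdom x with hx | hx <;> rcases hdom y with hy | hy
    · have := hconn.dist_triangle (u := x) (v := u) (w := y)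
      have h1 : G.dist x u ≤ 1 := le_of_eq (SimpleGraph.dist_eq_one_iff_adj.mpr hx)
      have h2 : G.dist u y ≤ 1 := by
        rw [SimpleGraph.dist_comm]
        exact le_of_eq (SimpleGraph.dist_eq_one_iff_adj.mpr hy)
      omega
    · have t1 := hconn.dist_triangle (u := x) (v := u) (w := y)
      have t2 := hconn.dist_triangle (u := u) (v := v) (w := y)
      have h1 : G.dist x u ≤ 1 := le_of_eq (SimpleGraph.dist_eq_one_iff_adj.mpr hx)
      have h2 : G.dist u v ≤ 1 := le_of_eq (SimpleGraph.dist_eq_one_iff_adj.mpr hadj)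
      have h3 : G.dist v y ≤ 1 := by
        rw [SimpleGraph.dist_comm]
        exact le_of_eq (SimpleGraph.dist_eq_one_iff_adj.mpr hy)
      omega
    · have t1 := hconn.dist_triangle (u := x) (v := v) (w := y)
      have t2 := hconn.dist_triangle (u := v) (v := u) (w := y)
      have h1 : G.dist x v ≤ 1 := le_of_eq (SimpleGraph.dist_eq_one_iff_adj.mpr hx)
      have h2 : G.dist v u ≤ 1 := le_of_eq (SimpleGraph.dist_eq_one_iff_adj.mpr hadj.symm)
      have h3 : G.dist u y ≤ 1 := by
        rw [SimpleGraph.dist_comm]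
        exact le_of_eq (SimpleGraph.dist_eq_one_iff_adj.mpr hy)
      omega
    · have := hconn.dist_triangle (u := x) (v := v) (w := y)
      have h1 : G.dist x v ≤ 1 := le_of_eq (SimpleGraph.dist_eq_one_iff_adj.mpr hx)
      have h2 : G.dist v y ≤ 1 := by
        rw [SimpleGraph.dist_comm]
        exact le_of_eq (SimpleGraph.dist_eq_one_iff_adj.mpr hy)
      omega
  have hnetop : G.ediam ≠ ⊤ := by
    obtain ⟨a, b, hab⟩ := G.exists_edist_eq_ediam_of_finite
    rw [← hab]
    exact SimpleGraph.edist_ne_top_iff_reachable.mpr (hconn a b)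
  have hdiam3 : G.diam ≤ 3 := by
    obtain ⟨x, y, hxy⟩ := G.exists_dist_eq_diam
    rw [← hxy]
    exact hdist x y
  -- helper : a vertex in both closed neighborhoods of packing elements gives a contradiction
  have hpack_common : ∀ P : Set V, IsPacking G P → ∀ p ∈ P, ∀ q ∈ P, p ≠ q →
      ∀ w, G.Adj p w → G.Adj q w → False := by
    intro P hP p hp q hq hpq w hpw hqw
    have hd := hP hp hq hpq
    exact Set.disjoint_left.mp hd (Set.mem_insert_of_mem _ hpw)
      (Set.mem_insert_of_mem _ hqw)
  -- every packing has at most 2 elements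
  have hpack_le : ∀ P : Set V, IsPacking G P → P.ncard ≤ 2 := by
    intro P hP
    by_contra hc
    push_neg at hc
    obtain ⟨T, hTsub, hT3⟩ := Set.exists_subset_card_eq (s := P) (show 3 ≤ P.ncard by omega)
    obtain ⟨a, b, c, hab, hac, hbc, rfl⟩ := Set.ncard_eq_three.mp hT3
    have ha := hTsub (show a ∈ ({a,b,c} : Set V) by simp)
    have hb := hTsub (show b ∈ ({a,b,c} : Set V) by simp)
    have hc' := hTsub (show c ∈ ({a,b,c} : Set V) by simp)
    rcases hdom a with h1 | h1 <;> rcases hdom b with h2 | h2 <;> rcases hdom c with h3 | h3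
    · exact hpack_common P hP a ha b hb hab u h1 h2
    · exact hpack_common P hP a ha b hb hab u h1 h2
    · exact hpack_common P hP a ha c hc' hac u h1 h3
    · exact hpack_common P hP b hb c hc' hbc v h2 h3
    · exact hpack_common P hP b hb c hc' hbc u h2 h3
    · exact hpack_common P hP a ha c hc' hac v h1 h3
    · exact hpack_common P hP a ha b hb hab v h1 h2
    · exact hpack_common P hP a ha b hb hab v h1 h2
  set M : Set ℕ := {n : ℕ | ∃ P : Set V, IsPacking G P ∧ P.ncard = n} with hM
  have hM_ne : M.Nonempty := ⟨0, ∅, Set.pairwise_empty _, Set.ncard_empty _⟩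
  have hM_bdd : BddAbove M := by
    refine ⟨2, fun n hn => ?_⟩
    obtain ⟨P, hP, rfl⟩ := hn
    exact hpack_le P hP
  refine ⟨hdiam3, ?_, ?_⟩
  · -- diam = 3 → packingNumber = 2
    intro h3
    obtain ⟨x, y, hxy⟩ := G.exists_dist_eq_diam
    rw [h3] at hxy
    have hne : x ≠ y := by
      intro h
      rw [h, SimpleGraph.dist_self] at hxy
      omega
    have hpack : IsPacking G {x, y} := by
      have hdisj : Disjoint (insert x (G.neighborSet x)) (insert y (G.neighborSet y)) := by
        rw [Set.disjoint_left]
        intro z hz1 hz2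
        simp only [Set.mem_insert_iff, SimpleGraph.mem_neighborSet] at hz1 hz2
        have hxz : G.dist x z ≤ 1 := by
          rcases hz1 with rfl | hz1
          · simp [SimpleGraph.dist_self]
          · exact le_of_eq (SimpleGraph.dist_eq_one_iff_adj.mpr hz1)
        have hzy : G.dist z y ≤ 1 := by
          rcases hz2 with rfl | hz2
          · simp [SimpleGraph.dist_self]
          · rw [SimpleGraph.dist_comm]
            exact le_of_eq (SimpleGraph.dist_eq_one_iff_adj.mpr hz2)
        have := hconn.dist_triangle (u := x) (v := z) (w := y)
        omega
      intro p hp q hq hpq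
      simp only [Set.mem_insert_iff, Set.mem_singleton_iff] at hp hq
      rcases hp with rfl | rfl <;> rcases hq with rfl | rfl
      · exact absurd rfl hpq
      · exact hdisj
      · exact hdisj.symm
      · exact absurd rfl hpq
    have h2M : 2 ∈ M := ⟨{x, y}, hpack, Set.ncard_pair hne⟩
    refine le_antisymm (csSup_le hM_ne ?_) (le_csSup hM_bdd h2M)
    rintro n ⟨P, hP, rfl⟩
    exact hpack_le P hP
  · -- packingNumber = 2 → diam = 3
    intro hρ
    have hmem : sSup M ∈ M := Nat.sSup_mem hM_ne hM_bdd
    rw [show sSup M = packingNumber G from rfl, hρ] at hmem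
    obtain ⟨P, hP, hP2⟩ := hmem
    obtain ⟨x, y, hne, rfl⟩ := Set.ncard_eq_two.mp hP2
    have hdisj : Disjoint (insert x (G.neighborSet x)) (insert y (G.neighborSet y)) :=
      hP (by simp) (by simp) hne
    have h3le : 3 ≤ G.dist x y := by
      by_contra hlt
      push_neg at hlt
      have hne0 : G.dist x y ≠ 0 :=
        SimpleGraph.dist_ne_zero_iff_ne_and_reachable.mpr ⟨hne, hconn x y⟩
      have : G.dist x y = 1 ∨ G.dist x y = 2 := by omega
      rcases this with h1 | h2
      · have hxy : G.Adj x y := SimpleGraph.dist_eq_one_iff_adj.mp h1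
        exact Set.disjoint_left.mp hdisj (Set.mem_insert x _)
          (Set.mem_insert_of_mem _ hxy.symm)
      · obtain ⟨p, hp⟩ := SimpleGraph.exists_walk_of_dist_ne_zero hne0
        rw [h2] at hp
        have ha1 : G.Adj x (p.getVert 1) := by
          have := p.adj_getVert_succ (i := 0) (by omega)
          rwa [p.getVert_zero] at this
        have ha2 : G.Adj (p.getVert 1) y := by
          have := p.adj_getVert_succ (i := 1) (by omega)
          rwa [show (1 : ℕ) + 1 = p.length by omega, p.getVert_length] at this
        exact Set.disjoint_left.mp hdisj (Set.mem_insert_of_mem _ ha1)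
          (Set.mem_insert_of_mem _ ha2.symm)
    have := SimpleGraph.dist_le_diam hnetop (u := x) (v := y)
    omega
end

section
/- Construct G from a Sperner hypergraph H with edges A_1,…,A_m as follows: take vertex set A = ∪A_i with enough edges so that every vertex of A has a neighbor in each A_i, and for each minimal transversal T of H add a new vertex v_T adjacent exactly to T. Then every total dominating set of G contains some A_i. -/
open Set

section Transversal

variable {ι V : Type*} {A : ι → Set V} {S T : Set V}

def IsTransversal (A : ι → Set V) (T : Set V) : Prop :=
  ∀ i, (T ∩ A i).Nonempty

lemma isTransversal_compl_iff : IsTransversal A Sᶜ ↔ ∀ i, ¬ A i ⊆ S := by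
  simp only [IsTransversal, not_subset, inter_nonempty, mem_compl_iff, and_comm]

lemma IsTransversal.exists_finite_subset [Finite ι] (h : IsTransversal A S) :
    ∃ T ⊆ S, T.Finite ∧ IsTransversal A T := by
  choose f hf using h
  exact ⟨range f, range_subset_iff.mpr fun i => (hf i).1, finite_range f,
    fun i => ⟨f i, mem_range_self i, (hf i).2⟩⟩

lemma IsTransversal.exists_minimal_subset [Finite ι] (h : IsTransversal A S) :
    ∃ T ⊆ S, Minimal (IsTransversal A) T := by
  obtain ⟨F, hFS, hF, hFA⟩ := h.exists_finite_subset
  have hfin : {T | T ⊆ F ∧ IsTransversal A T}.Finite := hF.finite_subsets.subset fun _ h => h.1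
  obtain ⟨T, hTF, hTmin⟩ := hfin.exists_le_minimal ⟨subset_rfl, hFA⟩
  exact ⟨T, hTF.trans hFS, hTmin.prop.2,
    fun T' hT' hle => hTmin.le_of_le ⟨hle.trans hTmin.prop.1, hT'⟩ hle⟩

end Transversal

theorem stmt_17_general {V : Type*} (G : SimpleGraph V)
    {m : ℕ} (A : Fin m → Set V)
    (hT : ∀ T : Set V, (∀ i, (T ∩ A i).Nonempty) →
      (∀ T' ⊂ T, ¬ ∀ i, (T' ∩ A i).Nonempty) →
      ∃ w : V, G.neighborSet w = T) :
    ∀ S : Set V, IsTDS G S → ∃ i, A i ⊆ S := by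
  intro S hS
  by_contra! hA
  obtain ⟨T, hTS, hTmin⟩ := (isTransversal_compl_iff.mpr hA).exists_minimal_subset
  obtain ⟨w, hw⟩ := hT T hTmin.prop fun T' hlt hT' => hTmin.not_lt hT' hlt
  obtain ⟨u, huS, hwu⟩ := hS w
  exact hTS (hw ▸ hwu) huS

/-- In the graph constructed from a Sperner hypergraph A₁,…,Aₘ (every vertex of
⋃Aᵢ has a neighbor in each Aᵢ, and each minimal transversal T is the neighborhood
of some vertex), every total dominating set contains some Aᵢ. -/
theorem stmt_17 {V : Type*} [Fintype V] (G : SimpleGraph V)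
    {m : ℕ} (hm : 0 < m) (A : Fin m → Set V)
    (hne : ∀ i, (A i).Nonempty)
    (hSperner : ∀ i j, i ≠ j → ¬ A i ⊆ A j)
    (hU : ∀ v ∈ ⋃ i, A i, ∀ i, ∃ u ∈ A i, G.Adj v u)
    (hT : ∀ T : Set V, (∀ i, (T ∩ A i).Nonempty) →
      (∀ T' ⊂ T, ¬ ∀ i, (T' ∩ A i).Nonempty) →
      ∃ w : V, G.neighborSet w = T) :
    ∀ S : Set V, IsTDS G S → ∃ i, A i ⊆ S :=
  stmt_17_general G A hT
end
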